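/- If f is a causal function and a is a strict value of f, then the open set U := {f > a} satisfies J⁺⁺(closure U) ⊆ U, i.e., every point reachable from the closure of U by a nonconstant causal curve lies in U; moreover every point of the boundary ∂U is a regular (nonsingular) point of C. -/

import Mathlib

open Manifold Set MeasureTheory Filter

variable {E : Type*} [NormedAddCommGroup E] [NormedSpace ℝ E]
  {H : Type*} [TopologicalSpace H] {I : ModelWithCorners ℝ E H}
  {M : Type*} [TopologicalSpace M] [ChartedSpace H M] [IsManifold I ((⊤ : ℕ∞) : WithTop ℕ∞) M]

/-- A closed cone field: each fiber is a convex cone, closed after adding `0`, either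
singular (the whole tangent space) or regular (contained in an open half space),
and the union with the zero section is closed in the tangent bundle. -/
def IsClosedConeField (I : ModelWithCorners ℝ E H) (M : Type*) [TopologicalSpace M]
    [ChartedSpace H M] [IsManifold I ((⊤ : ℕ∞) : WithTop ℕ∞) M] (C : ∀ x : M, Set (TangentSpace I x)) : Prop :=
  (∀ x, Convex ℝ (C x)) ∧
  (∀ x, ∀ v ∈ C x, ∀ t : ℝ, 0 < t → t • v ∈ C x) ∧
  (∀ x, IsClosed (insert (0 : TangentSpace I x) (C x))) ∧
  IsClosed {p : TangentBundle I M | p.snd = 0 ∨ p.snd ∈ C p.proj} ∧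
  (∀ x : M, C x = Set.univ ∨ ∃ p : TangentSpace I x →L[ℝ] ℝ, ∀ v ∈ C x, 0 < p v)

/-- A causal curve for the cone field `C` on `[a,b]`: continuous, almost everywhere
differentiable with derivative in the cone (or zero). -/
def IsCausalCurve (C : ∀ x : M, Set (TangentSpace I x)) (γ : ℝ → M) (a b : ℝ) : Prop :=
  ContinuousOn γ (Set.Icc a b) ∧
  ∀ᵐ t ∂(volume.restrict (Set.Icc a b)),
    MDifferentiableAt 𝓘(ℝ, ℝ) I γ t ∧
      mfderiv 𝓘(ℝ, ℝ) I γ t (1 : ℝ) ∈ insert (0 : TangentSpace I (γ t)) (C (γ t))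

/-- The causal future of a point. -/
def causalFuture (C : ∀ x : M, Set (TangentSpace I x)) (x : M) : Set M :=
  insert x {y | ∃ a b : ℝ, a < b ∧ ∃ γ : ℝ → M, IsCausalCurve C γ a b ∧
    γ a = x ∧ γ b = y ∧ ∃ s ∈ Set.Icc a b, ∃ t ∈ Set.Icc a b, γ s ≠ γ t}

/-- A causal function. -/
def IsCausalFun (C : ∀ x : M, Set (TangentSpace I x)) (f : M → ℝ) : Prop :=
  Continuous f ∧ ∀ x, ∀ y ∈ causalFuture C x, f x ≤ f y

/-- A Lyapunov function for `C`. -/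
def IsLyapunov (C : ∀ x : M, Set (TangentSpace I x)) (τ : M → ℝ) : Prop :=
  ContMDiff I 𝓘(ℝ, ℝ) (⊤ : ℕ∞) τ ∧
  ∀ x : M, mfderiv I 𝓘(ℝ, ℝ) τ x ≠ 0 → ∀ v ∈ C x, 0 < show ℝ from mfderiv I 𝓘(ℝ, ℝ) τ x v

/-- A neutral point of a function `f` with respect to `C`. -/
def IsNeutralPt (C : ∀ x : M, Set (TangentSpace I x)) (f : M → ℝ) (x : M) : Prop :=
  C x = Set.univ ∨ ∃ y ∈ causalFuture C x, y ≠ x ∧ f y = f x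

/-- A strict value of `f`. -/
def IsStrictValue (C : ∀ x : M, Set (TangentSpace I x)) (f : M → ℝ) (a : ℝ) : Prop :=
  ¬ ∃ x : M, IsNeutralPt C f x ∧ f x = a

/-- A special causal function. -/
def IsSpecialCausal (C : ∀ x : M, Set (TangentSpace I x)) (f : M → ℝ) : Prop :=
  IsCausalFun C f ∧ Dense {a : ℝ | IsStrictValue C f a}


/-- The strictly causal future of a set. -/
def strictFutureSet (C : ∀ x : M, Set (TangentSpace I x)) (A : Set M) : Set M :=
  {y | ∃ x ∈ A, ∃ a b : ℝ, a < b ∧ ∃ γ : ℝ → M, IsCausalCurve C γ a b ∧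
    γ a = x ∧ γ b = y ∧ ∃ s ∈ Set.Icc a b, ∃ t ∈ Set.Icc a b, γ s ≠ γ t}

/-
The closure of `{f > a}` lies in `{f ≥ a}`, and a causal function is monotone along causal
curves, so a nonconstant causal curve from `{f ≥ a}` ending in `{f ≤ a}` keeps `f ≡ a` and
contains two distinct points `γ s`, `γ t` with `γ t ∈ J⁺(γ s)`: then `γ s` is a neutral point
at level `a`. A boundary point `x` has `f x = a`, so it cannot be singular either.
-/

section CausalCurves

omit [IsManifold I ((⊤ : ℕ∞) : WithTop ℕ∞) M]

variable {C : ∀ x : M, Set (TangentSpace I x)}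

theorem IsCausalCurve.mono {γ : ℝ → M} {a b s t : ℝ} (h : IsCausalCurve C γ a b)
    (hs : a ≤ s) (ht : t ≤ b) : IsCausalCurve C γ s t :=
  ⟨h.1.mono (Icc_subset_Icc hs ht),
    h.2.filter_mono (ae_mono (Measure.restrict_mono (Icc_subset_Icc hs ht) le_rfl))⟩

theorem IsCausalCurve.mem_causalFuture {γ : ℝ → M} {a b s t : ℝ} (h : IsCausalCurve C γ a b)
    (hs : a ≤ s) (hst : s ≤ t) (ht : t ≤ b) : γ t ∈ causalFuture C (γ s) := by
  by_cases hne : γ s = γ t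
  · exact hne ▸ mem_insert _ _
  · have hlt : s < t := hst.lt_of_ne (by rintro rfl; exact hne rfl)
    exact Or.inr ⟨s, t, hlt, γ, h.mono hs ht, rfl, rfl,
      s, left_mem_Icc.2 hst, t, right_mem_Icc.2 hst, hne⟩

theorem IsCausalFun.monotoneOn_comp {f : M → ℝ} (hf : IsCausalFun C f) {γ : ℝ → M} {a b : ℝ}
    (h : IsCausalCurve C γ a b) : MonotoneOn (f ∘ γ) (Icc a b) :=
  fun _ hs _ ht hst => hf.2 _ _ (h.mem_causalFuture hs.1 hst ht.2)

theorem IsStrictValue.eq_of_mem_causalFuture {f : M → ℝ} {a : ℝ} (ha : IsStrictValue C f a)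
    {x y : M} (hy : y ∈ causalFuture C x) (hx : f x = a) (hxy : f y = a) : y = x := by
  by_contra hne
  exact ha ⟨x, Or.inr ⟨y, hy, hne, hxy.trans hx.symm⟩, hx⟩

theorem strictFutureSet_closure_superlevel_subset {f : M → ℝ} (hf : IsCausalFun C f) {a : ℝ}
    (ha : IsStrictValue C f a) :
    strictFutureSet C (closure {x | a < f x}) ⊆ {x | a < f x} := by
  rintro _ ⟨x, hx, a', b', -, γ, hγ, rfl, rfl, s, hs, t, ht, hne⟩
  by_contra hfb
  replace hfb : f (γ b') ≤ a := not_lt.1 hfb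
  have hfa : a ≤ f (γ a') := closure_lt_subset_le continuous_const hf.1 hx
  have hmono := hf.monotoneOn_comp hγ
  have hf_eq : ∀ r ∈ Icc a' b', f (γ r) = a := fun r hr =>
    le_antisymm ((hmono hr (right_mem_Icc.2 (hr.1.trans hr.2)) hr.2).trans hfb)
      (hfa.trans (hmono (left_mem_Icc.2 (hr.1.trans hr.2)) hr hr.1))
  rcases le_total s t with hst | hts
  · exact hne (ha.eq_of_mem_causalFuture (hγ.mem_causalFuture hs.1 hst ht.2)
      (hf_eq s hs) (hf_eq t ht)).symm
  · exact hne (ha.eq_of_mem_causalFuture (hγ.mem_causalFuture ht.1 hts hs.2)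
      (hf_eq t ht) (hf_eq s hs))

end CausalCurves

theorem strict_value_superlevel_general (C : ∀ x : M, Set (TangentSpace I x))
    (f : M → ℝ) (hf : IsCausalFun C f)
    (a : ℝ) (ha : IsStrictValue C f a) :
    strictFutureSet C (closure {x : M | a < f x}) ⊆ {x : M | a < f x} ∧
      ∀ x ∈ frontier {x : M | a < f x}, C x ≠ Set.univ := by
  exact ⟨strictFutureSet_closure_superlevel_subset hf ha, fun x hx hCx =>
    ha ⟨x, Or.inl hCx, (frontier_lt_subset_eq continuous_const hf.1 hx).symm⟩⟩

/-- If `a` is a strict value of a causal function `f`, then `U = {f > a}` satisfies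
`J⁺⁺(closure U) ⊆ U` and every boundary point of `U` is regular for `C`. -/
theorem strict_value_superlevel (C : ∀ x : M, Set (TangentSpace I x))
    (hC : IsClosedConeField I M C) (f : M → ℝ) (hf : IsCausalFun C f)
    (a : ℝ) (ha : IsStrictValue C f a) :
    strictFutureSet C (closure {x : M | a < f x}) ⊆ {x : M | a < f x} ∧
      ∀ x ∈ frontier {x : M | a < f x}, C x ≠ Set.univ :=
  strict_value_superlevel_general C f hf a ha
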